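/- Let Ĥ_q be the universal DAHA of type (C₁∨, C₁) and set A = t₁t₀ + (t₁t₀)⁻¹, B = t₃t₀ + (t₃t₀)⁻¹, C = t₂t₀ + (t₂t₀)⁻¹, Tᵢ = tᵢ + tᵢ⁻¹. Then C + (qAB − q⁻¹BA)/(q² − q⁻²) = ((q⁻¹t₀ + qt₀⁻¹)T₂ + T₃T₁)/(q + q⁻¹) holds in Ĥ_q. -/

import Mathlib

noncomputable section

open FreeAlgebra

/-- Defining relations of the universal DAHA of type `(C₁∨, C₁)`.
Generators: `(i, false)` is `tᵢ`, `(i, true)` is `tᵢ⁻¹`. -/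
inductive DAHARel (F : Type*) [Field F] (q : F) :
    FreeAlgebra F (Fin 4 × Bool) → FreeAlgebra F (Fin 4 × Bool) → Prop
  | invRight (i : Fin 4) : DAHARel F q (ι F (i, false) * ι F (i, true)) 1
  | invLeft (i : Fin 4) : DAHARel F q (ι F (i, true) * ι F (i, false)) 1
  | central (i : Fin 4) (g : Fin 4 × Bool) :
      DAHARel F q ((ι F (i, false) + ι F (i, true)) * ι F g)
        (ι F g * (ι F (i, false) + ι F (i, true)))
  | prodRel : DAHARel F q
      (ι F ((0 : Fin 4), false) * ι F ((1 : Fin 4), false) * ι F ((2 : Fin 4), false) *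
        ι F ((3 : Fin 4), false))
      (algebraMap F (FreeAlgebra F (Fin 4 × Bool)) q⁻¹)

/-- The universal DAHA of type `(C₁∨, C₁)`. -/
abbrev DAHA (F : Type*) [Field F] (q : F) := RingQuot (DAHARel F q)

/-- The generator `tᵢ` of the universal DAHA. -/
def DAHA.t {F : Type*} [Field F] (q : F) (i : Fin 4) : DAHA F q :=
  RingQuot.mkAlgHom F (DAHARel F q) (ι F (i, false))

/-- The generator `tᵢ⁻¹` of the universal DAHA. -/
def DAHA.tInv {F : Type*} [Field F] (q : F) (i : Fin 4) : DAHA F q :=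
  RingQuot.mkAlgHom F (DAHARel F q) (ι F (i, true))

/-- `X = t₃ t₀`. -/
def DAHA.X {F : Type*} [Field F] (q : F) : DAHA F q := DAHA.t q 3 * DAHA.t q 0

/-- `X⁻¹ = t₀⁻¹ t₃⁻¹`. -/
def DAHA.Xinv {F : Type*} [Field F] (q : F) : DAHA F q := DAHA.tInv q 0 * DAHA.tInv q 3

/-- `Y = t₀ t₁`. -/
def DAHA.Y {F : Type*} [Field F] (q : F) : DAHA F q := DAHA.t q 0 * DAHA.t q 1

/-- `Y⁻¹ = t₁⁻¹ t₀⁻¹`. -/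
def DAHA.Yinv {F : Type*} [Field F] (q : F) : DAHA F q := DAHA.tInv q 1 * DAHA.tInv q 0

/-- `Tᵢ = tᵢ + tᵢ⁻¹`. -/
def DAHA.T {F : Type*} [Field F] (q : F) (i : Fin 4) : DAHA F q := DAHA.t q i + DAHA.tInv q i

section Aux

variable {F : Type*} [Field F] (q : F)

lemma DAHA.t_mul_tInv (i : Fin 4) : DAHA.t q i * DAHA.tInv q i = 1 := by
  have h := RingQuot.mkAlgHom_rel F (DAHARel.invRight (F := F) (q := q) i)
  simpa [DAHA.t, DAHA.tInv, map_mul, map_one] using h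

lemma DAHA.tInv_mul_t (i : Fin 4) : DAHA.tInv q i * DAHA.t q i = 1 := by
  have h := RingQuot.mkAlgHom_rel F (DAHARel.invLeft (F := F) (q := q) i)
  simpa [DAHA.t, DAHA.tInv, map_mul, map_one] using h

lemma DAHA.T_central (i : Fin 4) (a : DAHA F q) :
    DAHA.T q i * a = a * DAHA.T q i := by
  obtain ⟨b, rfl⟩ := RingQuot.mkAlgHom_surjective F (DAHARel F q) a
  induction b using FreeAlgebra.induction with
  | grade0 r =>
      rw [AlgHom.commutes]
      exact (Algebra.commutes r _).symm
  | grade1 x =>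
      have h := RingQuot.mkAlgHom_rel F (DAHARel.central (F := F) (q := q) i x)
      simpa [DAHA.T, DAHA.t, DAHA.tInv, map_mul, map_add] using h
  | mul a b ha hb =>
      rw [map_mul, ← mul_assoc, ha, mul_assoc, hb, mul_assoc]
  | add a b ha hb =>
      rw [map_add, mul_add, ha, hb, add_mul]

lemma DAHA.prod_eq : DAHA.t q 0 * DAHA.t q 1 * DAHA.t q 2 * DAHA.t q 3
    = algebraMap F (DAHA F q) q⁻¹ := by
  have h := RingQuot.mkAlgHom_rel F (DAHARel.prodRel (F := F) (q := q))
  simpa [DAHA.t, map_mul, AlgHom.commutes] using h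

lemma DAHA.tInv_t_cancel (i : Fin 4) (x : DAHA F q) :
    DAHA.tInv q i * (DAHA.t q i * x) = x := by
  rw [← mul_assoc, DAHA.tInv_mul_t, one_mul]

lemma DAHA.t_tInv_cancel (i : Fin 4) (x : DAHA F q) :
    DAHA.t q i * (DAHA.tInv q i * x) = x := by
  rw [← mul_assoc, DAHA.t_mul_tInv, one_mul]

lemma DAHA.t2_eq : DAHA.t q 2
    = q⁻¹ • (DAHA.tInv q 1 * (DAHA.tInv q 0 * DAHA.tInv q 3)) := by
  have h := congrArg
    (fun z => DAHA.tInv q 1 * (DAHA.tInv q 0 * (z * DAHA.tInv q 3)))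
    (DAHA.prod_eq q)
  simp only [mul_assoc] at h
  rw [DAHA.t_mul_tInv, mul_one] at h
  rw [DAHA.tInv_t_cancel, DAHA.tInv_t_cancel] at h
  rw [Algebra.algebraMap_eq_smul_one, smul_mul_assoc, one_mul, mul_smul_comm,
    mul_smul_comm] at h
  exact h

lemma DAHA.t2_mul : DAHA.t q 2 * (DAHA.t q 3 * (DAHA.t q 0 * DAHA.t q 1))
    = q⁻¹ • (1 : DAHA F q) := by
  rw [DAHA.t2_eq q, smul_mul_assoc]
  simp only [mul_assoc]
  rw [DAHA.tInv_t_cancel, DAHA.tInv_t_cancel, DAHA.tInv_mul_t]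

lemma DAHA.tInv2_eq (hq0 : q ≠ 0) : DAHA.tInv q 2
    = q • (DAHA.t q 3 * (DAHA.t q 0 * DAHA.t q 1)) := by
  have h1 : DAHA.t q 2 * (q • (DAHA.t q 3 * (DAHA.t q 0 * DAHA.t q 1))) = 1 := by
    rw [mul_smul_comm, DAHA.t2_mul, smul_smul, mul_inv_cancel₀ hq0, one_smul]
  calc DAHA.tInv q 2 = DAHA.tInv q 2 *
        (DAHA.t q 2 * (q • (DAHA.t q 3 * (DAHA.t q 0 * DAHA.t q 1)))) := by
          rw [h1, mul_one]
    _ = q • (DAHA.t q 3 * (DAHA.t q 0 * DAHA.t q 1)) := DAHA.tInv_t_cancel q 2 _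

lemma DAHA.z_invR (i : Fin 4) : DAHA.t q i * DAHA.tInv q i - 1 = (0 : DAHA F q) := by
  rw [DAHA.t_mul_tInv, sub_self]

lemma DAHA.z_invL (i : Fin 4) : DAHA.tInv q i * DAHA.t q i - 1 = (0 : DAHA F q) := by
  rw [DAHA.tInv_mul_t, sub_self]

lemma DAHA.z_w : DAHA.t q 2
    - q⁻¹ • (DAHA.tInv q 1 * (DAHA.tInv q 0 * DAHA.tInv q 3)) = (0 : DAHA F q) := by
  rw [← DAHA.t2_eq, sub_self]

lemma DAHA.z_wb (hq0 : q ≠ 0) : DAHA.tInv q 2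
    - q • (DAHA.t q 3 * (DAHA.t q 0 * DAHA.t q 1)) = (0 : DAHA F q) := by
  rw [← DAHA.tInv2_eq q hq0, sub_self]

lemma DAHA.z_T (i : Fin 4) (a : DAHA F q) :
    a * DAHA.T q i - DAHA.T q i * a = (0 : DAHA F q) := by
  rw [DAHA.T_central, sub_self]

end Aux

set_option maxHeartbeats 10000000 in
/-- With `A = t₁t₀ + (t₁t₀)⁻¹`, `B = t₃t₀ + (t₃t₀)⁻¹`, `C = t₂t₀ + (t₂t₀)⁻¹`:
`C + (qAB - q⁻¹BA)/(q² - q⁻²) = ((q⁻¹t₀ + qt₀⁻¹)T₂ + T₃T₁)/(q + q⁻¹)`. -/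
theorem stmt_13 (F : Type*) [Field F] (q : F) (hq0 : q ≠ 0) (hq4 : q ^ 4 ≠ 1) :
    (DAHA.t q 2 * DAHA.t q 0 + DAHA.tInv q 0 * DAHA.tInv q 2) +
        (q ^ 2 - q⁻¹ ^ 2)⁻¹ •
          (q • ((DAHA.t q 1 * DAHA.t q 0 + DAHA.tInv q 0 * DAHA.tInv q 1) *
              (DAHA.t q 3 * DAHA.t q 0 + DAHA.tInv q 0 * DAHA.tInv q 3)) -
            q⁻¹ • ((DAHA.t q 3 * DAHA.t q 0 + DAHA.tInv q 0 * DAHA.tInv q 3) *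
              (DAHA.t q 1 * DAHA.t q 0 + DAHA.tInv q 0 * DAHA.tInv q 1))) =
      (q + q⁻¹)⁻¹ •
        ((q⁻¹ • DAHA.t q 0 + q • DAHA.tInv q 0) * DAHA.T q 2 +
          DAHA.T q 3 * DAHA.T q 1) := by
  have hs : q ^ 2 - q⁻¹ ^ 2 ≠ 0 := by
    have h4 : q ^ 4 - 1 = q ^ 2 * (q ^ 2 - q⁻¹ ^ 2) := by
      have hqq : q ^ 2 * q⁻¹ ^ 2 = 1 := by
        rw [← mul_pow, mul_inv_cancel₀ hq0, one_pow]
      rw [mul_sub, hqq]; ring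
    intro h
    apply hq4
    rw [h, mul_zero] at h4
    exact sub_eq_zero.mp h4
  have hp : q + q⁻¹ ≠ 0 := by
    have h4 : q ^ 4 - 1 = (q ^ 2 - 1) * (q * (q + q⁻¹)) := by
      rw [mul_add, mul_inv_cancel₀ hq0]; ring
    intro h
    apply hq4
    rw [h, mul_zero, mul_zero] at h4
    exact sub_eq_zero.mp h4
  have hd : (q ^ 2 - q⁻¹ ^ 2) * (q + q⁻¹)⁻¹ = q - q⁻¹ := by
    have hfac : (q - q⁻¹) * (q + q⁻¹) = q ^ 2 - q⁻¹ ^ 2 := by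
      rw [sub_mul, mul_add, mul_add, mul_inv_cancel₀ hq0, inv_mul_cancel₀ hq0]
      ring
    rw [← hfac, mul_assoc, mul_inv_cancel₀ hp, mul_one]
  have cancel : ∀ x y : DAHA F q,
      (q ^ 2 - q⁻¹ ^ 2) • x = (q ^ 2 - q⁻¹ ^ 2) • y → x = y := by
    intro x y h
    have h2 := congrArg (fun z => (q ^ 2 - q⁻¹ ^ 2)⁻¹ • z) h
    simpa only [smul_smul, inv_mul_cancel₀ hs, one_smul] using h2
  apply cancel
  rw [smul_add, smul_smul, smul_smul, mul_inv_cancel₀ hs, one_smul, hd]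
  have key :
    (q ^ 2 - q⁻¹ ^ 2) • (DAHA.t q 2 * DAHA.t q 0 + DAHA.tInv q 0 * DAHA.tInv q 2) +
      (q • ((DAHA.t q 1 * DAHA.t q 0 + DAHA.tInv q 0 * DAHA.tInv q 1) *
          (DAHA.t q 3 * DAHA.t q 0 + DAHA.tInv q 0 * DAHA.tInv q 3)) -
        q⁻¹ • ((DAHA.t q 3 * DAHA.t q 0 + DAHA.tInv q 0 * DAHA.tInv q 3) *
          (DAHA.t q 1 * DAHA.t q 0 + DAHA.tInv q 0 * DAHA.tInv q 1))) =
      (q - q⁻¹) • ((q⁻¹ • DAHA.t q 0 + q • DAHA.tInv q 0) * DAHA.T q 2 + DAHA.T q 3 * DAHA.T q 1) +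
      (q⁻¹ ^ 2) • (DAHA.t q 0 * (DAHA.T q 2) - (DAHA.T q 2) * DAHA.t q 0) +
      (DAHA.t q 0 * (DAHA.t q 1 * (DAHA.T q 2) - (DAHA.T q 2) * DAHA.t q 1) * DAHA.tInv q 1) +
      (DAHA.tInv q 0 * (DAHA.t q 3 * (DAHA.T q 2) - (DAHA.T q 2) * DAHA.t q 3) * DAHA.t q 3) +
      ((1 : F) * q ^ 2) • ((DAHA.t q 2 - q⁻¹ • (DAHA.tInv q 1 * (DAHA.tInv q 0 * DAHA.tInv q 3))) * (DAHA.t q 0)) +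
      ((-1 : F) * q⁻¹ ^ 2 + (1 : F) * 1) • ((DAHA.tInv q 0) * (DAHA.tInv q 2 - q • (DAHA.t q 3 * (DAHA.t q 0 * DAHA.t q 1)))) +
      ((-1 : F) * q⁻¹ ^ 1 + (1 : F) * q ^ 1) • (((DAHA.tInv q 0) * (DAHA.T q 3) - (DAHA.T q 3) * (DAHA.tInv q 0)) * (DAHA.t q 0 * DAHA.t q 1)) +
      ((-1 : F) * q⁻¹ ^ 1 + (1 : F) * q ^ 1) • ((DAHA.T q 3) * (DAHA.tInv q 0 * DAHA.t q 0 - 1) * (DAHA.t q 1)) +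
      ((1 : F) * q⁻¹ ^ 1 + (-1 : F) * q ^ 1) • (((DAHA.tInv q 0 * DAHA.tInv q 3) * (DAHA.T q 0) - (DAHA.T q 0) * (DAHA.tInv q 0 * DAHA.tInv q 3)) * (DAHA.t q 1)) +
      ((1 : F) * q⁻¹ ^ 1 + (-1 : F) * q ^ 1) • (((DAHA.T q 0 * DAHA.tInv q 0 * DAHA.tInv q 3) * (DAHA.T q 1) - (DAHA.T q 1) * (DAHA.T q 0 * DAHA.tInv q 0 * DAHA.tInv q 3))) +
      ((1 : F) * q⁻¹ ^ 1) • ((DAHA.T q 1 * (DAHA.T q 0) - (DAHA.T q 0) * DAHA.T q 1) * (DAHA.tInv q 0 * DAHA.tInv q 3)) +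
      ((-1 : F) * q⁻¹ ^ 1 + (1 : F) * q ^ 1) • (((DAHA.tInv q 0 * DAHA.tInv q 3 * DAHA.tInv q 0) * (DAHA.T q 1) - (DAHA.T q 1) * (DAHA.tInv q 0 * DAHA.tInv q 3 * DAHA.tInv q 0))) +
      ((1 : F) * q ^ 1) • (((DAHA.T q 1) * (DAHA.T q 0) - (DAHA.T q 0) * (DAHA.T q 1)) * (DAHA.t q 3 * DAHA.t q 0)) +
      ((1 : F) * q ^ 1) • (((DAHA.T q 0 * DAHA.T q 1) * (DAHA.T q 3) - (DAHA.T q 3) * (DAHA.T q 0 * DAHA.T q 1)) * (DAHA.t q 0)) +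
      ((1 : F) * q ^ 1) • (((DAHA.T q 3 * DAHA.T q 0 * DAHA.T q 1) * (DAHA.T q 0) - (DAHA.T q 0) * (DAHA.T q 3 * DAHA.T q 0 * DAHA.T q 1))) +
      ((1 : F) * q ^ 1) • ((DAHA.T q 0) * (DAHA.T q 3 * (DAHA.T q 0) - (DAHA.T q 0) * DAHA.T q 3) * (DAHA.T q 1)) +
      ((1 : F) * q ^ 1) • ((DAHA.T q 0 * DAHA.T q 0) * (DAHA.T q 3 * (DAHA.T q 1) - (DAHA.T q 1) * DAHA.T q 3)) +
      ((-1 : F) * q ^ 1) • ((DAHA.T q 3 * (DAHA.T q 0) - (DAHA.T q 0) * DAHA.T q 3) * (DAHA.T q 1 * DAHA.tInv q 0)) +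
      ((-1 : F) * q ^ 1) • ((DAHA.T q 0) * (DAHA.T q 3 * (DAHA.T q 1) - (DAHA.T q 1) * DAHA.T q 3) * (DAHA.tInv q 0)) +
      ((-1 : F) * q ^ 1) • (((DAHA.T q 0 * DAHA.T q 1 * DAHA.tInv q 3) * (DAHA.T q 0) - (DAHA.T q 0) * (DAHA.T q 0 * DAHA.T q 1 * DAHA.tInv q 3))) +
      ((1 : F) * q ^ 1) • ((DAHA.T q 3 * (DAHA.T q 1) - (DAHA.T q 1) * DAHA.T q 3)) +
      ((-1 : F) * q⁻¹ ^ 1) • (((DAHA.T q 1 * DAHA.tInv q 0 * DAHA.tInv q 3) * (DAHA.T q 0) - (DAHA.T q 0) * (DAHA.T q 1 * DAHA.tInv q 0 * DAHA.tInv q 3))) +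
      ((-1 : F) * q ^ 1) • (((DAHA.tInv q 1) * (DAHA.T q 0) - (DAHA.T q 0) * (DAHA.tInv q 1)) * (DAHA.t q 3 * DAHA.t q 0)) +
      ((1 : F) * q ^ 1) • (((DAHA.tInv q 1 * DAHA.tInv q 0) * (DAHA.T q 3) - (DAHA.T q 3) * (DAHA.tInv q 1 * DAHA.tInv q 0)) * (DAHA.t q 0)) +
      ((1 : F) * q ^ 1) • ((DAHA.T q 3 * DAHA.tInv q 1) * (DAHA.tInv q 0 * DAHA.t q 0 - 1)) +
      ((1 : F) * q ^ 1) • ((DAHA.t q 1) * (DAHA.t q 0 * DAHA.tInv q 0 - 1) * (DAHA.tInv q 3)) +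
      ((-1 : F) * q ^ 1) • ((DAHA.T q 0) * (DAHA.T q 1 * (DAHA.T q 0) - (DAHA.T q 0) * DAHA.T q 1) * (DAHA.T q 3)) +
      ((1 : F) * q ^ 1) • ((DAHA.T q 1 * (DAHA.T q 0) - (DAHA.T q 0) * DAHA.T q 1) * (DAHA.T q 3 * DAHA.tInv q 0)) +
      ((1 : F) * q ^ 1) • (((DAHA.T q 1 * DAHA.T q 0 * DAHA.tInv q 3) * (DAHA.T q 0) - (DAHA.T q 0) * (DAHA.T q 1 * DAHA.T q 0 * DAHA.tInv q 3))) +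
      ((1 : F) * q ^ 1) • ((DAHA.T q 0) * (DAHA.T q 1 * (DAHA.T q 0) - (DAHA.T q 0) * DAHA.T q 1) * (DAHA.tInv q 3)) +
      ((-1 : F) * q ^ 1) • ((DAHA.T q 1 * (DAHA.T q 0) - (DAHA.T q 0) * DAHA.T q 1) * (DAHA.tInv q 3 * DAHA.tInv q 0)) +
      ((-1 : F) * q⁻¹ ^ 1) • ((DAHA.t q 3) * (DAHA.t q 0 * DAHA.tInv q 0 - 1) * (DAHA.tInv q 1)) +
      ((-1 : F) * q⁻¹ ^ 1) • (((DAHA.tInv q 0 * DAHA.tInv q 3) * (DAHA.T q 1) - (DAHA.T q 1) * (DAHA.tInv q 0 * DAHA.tInv q 3)) * (DAHA.t q 0)) +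
      ((1 : F) * q⁻¹ ^ 1) • (((DAHA.tInv q 0 * DAHA.tInv q 3 * DAHA.tInv q 1) * (DAHA.T q 0) - (DAHA.T q 0) * (DAHA.tInv q 0 * DAHA.tInv q 3 * DAHA.tInv q 1))) +
      ((-1 : F) * q ^ 1) • ((DAHA.T q 0 * DAHA.T q 1) * (DAHA.T q 3 * (DAHA.T q 0) - (DAHA.T q 0) * DAHA.T q 3)) +
      ((1 : F) * 1 + (-1 : F) * q ^ 2) • ((DAHA.tInv q 0) * (DAHA.t q 2 - q⁻¹ • (DAHA.tInv q 1 * (DAHA.tInv q 0 * DAHA.tInv q 3)))) +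
      ((1 : F) * q⁻¹ ^ 2) • ((DAHA.tInv q 2 - q • (DAHA.t q 3 * (DAHA.t q 0 * DAHA.t q 1))) * (DAHA.t q 0)) +
      ((1 : F) * 1) • ((DAHA.t q 0 * DAHA.t q 2) * (DAHA.t q 1 * DAHA.tInv q 1 - 1)) +
      ((1 : F) * 1) • ((DAHA.t q 0 * DAHA.tInv q 2) * (DAHA.t q 1 * DAHA.tInv q 1 - 1)) +
      ((-1 : F) * 1) • ((DAHA.t q 0 * DAHA.t q 1) * (DAHA.t q 2 - q⁻¹ • (DAHA.tInv q 1 * (DAHA.tInv q 0 * DAHA.tInv q 3))) * (DAHA.tInv q 1)) +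
      ((-1 : F) * q⁻¹ ^ 1) • ((DAHA.t q 0) * (DAHA.t q 1 * DAHA.tInv q 1 - 1) * (DAHA.tInv q 0 * DAHA.tInv q 3 * DAHA.tInv q 1)) +
      ((-1 : F) * q⁻¹ ^ 1) • ((DAHA.t q 0 * DAHA.tInv q 0 - 1) * (DAHA.tInv q 3 * DAHA.tInv q 1)) +
      ((-1 : F) * 1) • ((DAHA.t q 0 * DAHA.t q 1) * (DAHA.tInv q 2 - q • (DAHA.t q 3 * (DAHA.t q 0 * DAHA.t q 1))) * (DAHA.tInv q 1)) +
      ((-1 : F) * q ^ 1) • ((DAHA.t q 0 * DAHA.t q 1 * DAHA.t q 3 * DAHA.t q 0) * (DAHA.t q 1 * DAHA.tInv q 1 - 1)) +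
      ((-1 : F) * q ^ 1) • (((DAHA.T q 0) * (DAHA.T q 1) - (DAHA.T q 1) * (DAHA.T q 0)) * (DAHA.t q 3 * DAHA.t q 0)) +
      ((-1 : F) * q ^ 1) • (((DAHA.T q 1 * DAHA.T q 0) * (DAHA.T q 3) - (DAHA.T q 3) * (DAHA.T q 1 * DAHA.T q 0)) * (DAHA.t q 0)) +
      ((-1 : F) * q ^ 1) • (((DAHA.T q 3 * DAHA.T q 1 * DAHA.T q 0) * (DAHA.T q 0) - (DAHA.T q 0) * (DAHA.T q 3 * DAHA.T q 1 * DAHA.T q 0))) +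
      ((-1 : F) * q ^ 1) • ((DAHA.T q 0) * (DAHA.T q 3 * (DAHA.T q 1) - (DAHA.T q 1) * DAHA.T q 3) * (DAHA.T q 0)) +
      ((1 : F) * q ^ 1) • (((DAHA.tInv q 0) * (DAHA.T q 1) - (DAHA.T q 1) * (DAHA.tInv q 0)) * (DAHA.t q 3 * DAHA.t q 0)) +
      ((1 : F) * 1) • ((DAHA.tInv q 0) * (DAHA.t q 2 - q⁻¹ • (DAHA.tInv q 1 * (DAHA.tInv q 0 * DAHA.tInv q 3))) * (DAHA.t q 3 * DAHA.t q 3)) +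
      ((1 : F) * q⁻¹ ^ 1) • ((DAHA.tInv q 0 * DAHA.tInv q 1 * DAHA.tInv q 0) * (DAHA.tInv q 3 * DAHA.t q 3 - 1) * (DAHA.t q 3)) +
      ((1 : F) * q⁻¹ ^ 1) • (((DAHA.tInv q 0 * DAHA.tInv q 1 * DAHA.tInv q 0) * (DAHA.T q 3) - (DAHA.T q 3) * (DAHA.tInv q 0 * DAHA.tInv q 1 * DAHA.tInv q 0))) +
      ((1 : F) * 1) • ((DAHA.tInv q 0) * (DAHA.tInv q 2 - q • (DAHA.t q 3 * (DAHA.t q 0 * DAHA.t q 1))) * (DAHA.t q 3 * DAHA.t q 3)) +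
      ((1 : F) * q ^ 1) • (((DAHA.tInv q 0) * (DAHA.T q 3) - (DAHA.T q 3) * (DAHA.tInv q 0)) * (DAHA.t q 0 * DAHA.t q 1 * DAHA.t q 3 * DAHA.t q 3)) +
      ((1 : F) * q ^ 1) • ((DAHA.T q 3) * (DAHA.tInv q 0 * DAHA.t q 0 - 1) * (DAHA.t q 1 * DAHA.t q 3 * DAHA.t q 3)) +
      ((1 : F) * q ^ 1) • (((DAHA.T q 3) * (DAHA.T q 1) - (DAHA.T q 1) * (DAHA.T q 3)) * (DAHA.t q 3 * DAHA.t q 3)) +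
      ((1 : F) * q ^ 1) • (((DAHA.T q 1 * DAHA.T q 3) * (DAHA.T q 3) - (DAHA.T q 3) * (DAHA.T q 1 * DAHA.T q 3)) * (DAHA.t q 3)) +
      ((1 : F) * q ^ 1) • (((DAHA.T q 3 * DAHA.T q 1 * DAHA.T q 3) * (DAHA.T q 3) - (DAHA.T q 3) * (DAHA.T q 3 * DAHA.T q 1 * DAHA.T q 3))) +
      ((1 : F) * q ^ 1) • ((DAHA.T q 3) * (DAHA.T q 3 * (DAHA.T q 1) - (DAHA.T q 1) * DAHA.T q 3) * (DAHA.T q 3)) +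
      ((-1 : F) * q ^ 1) • ((DAHA.T q 3 * (DAHA.T q 1) - (DAHA.T q 1) * DAHA.T q 3) * (DAHA.T q 3 * DAHA.tInv q 3)) +
      ((-1 : F) * q ^ 1) • ((DAHA.T q 1 * DAHA.T q 3) * (DAHA.tInv q 3 * DAHA.t q 3 - 1)) +
      ((-1 : F) * q ^ 1) • (((DAHA.T q 3 * DAHA.tInv q 1) * (DAHA.T q 3) - (DAHA.T q 3) * (DAHA.T q 3 * DAHA.tInv q 1)) * (DAHA.t q 3)) +
      ((1 : F) * q ^ 1) • ((DAHA.T q 3 * DAHA.tInv q 1) * (DAHA.tInv q 3 * DAHA.t q 3 - 1)) +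
      ((-1 : F) * q ^ 1) • (((DAHA.tInv q 0 * DAHA.tInv q 3) * (DAHA.T q 0) - (DAHA.T q 0) * (DAHA.tInv q 0 * DAHA.tInv q 3)) * (DAHA.t q 1 * DAHA.t q 3 * DAHA.t q 3)) +
      ((-1 : F) * q ^ 1) • (((DAHA.T q 0 * DAHA.tInv q 0 * DAHA.tInv q 3) * (DAHA.T q 1) - (DAHA.T q 1) * (DAHA.T q 0 * DAHA.tInv q 0 * DAHA.tInv q 3)) * (DAHA.t q 3 * DAHA.t q 3)) +
      ((-1 : F) * q ^ 1) • ((DAHA.T q 1 * DAHA.T q 0 * DAHA.tInv q 0) * (DAHA.tInv q 3 * DAHA.t q 3 - 1) * (DAHA.t q 3)) +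
      ((-1 : F) * q ^ 1) • (((DAHA.T q 1 * DAHA.T q 0 * DAHA.tInv q 0) * (DAHA.T q 3) - (DAHA.T q 3) * (DAHA.T q 1 * DAHA.T q 0 * DAHA.tInv q 0))) +
      ((1 : F) * q ^ 1) • (((DAHA.T q 0 * DAHA.tInv q 0 * DAHA.tInv q 3 * DAHA.tInv q 1) * (DAHA.T q 3) - (DAHA.T q 3) * (DAHA.T q 0 * DAHA.tInv q 0 * DAHA.tInv q 3 * DAHA.tInv q 1)) * (DAHA.t q 3)) +
      ((1 : F) * q ^ 1) • (((DAHA.T q 3 * DAHA.T q 0 * DAHA.tInv q 0 * DAHA.tInv q 3 * DAHA.tInv q 1) * (DAHA.T q 3) - (DAHA.T q 3) * (DAHA.T q 3 * DAHA.T q 0 * DAHA.tInv q 0 * DAHA.tInv q 3 * DAHA.tInv q 1))) +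
      ((1 : F) * q ^ 1) • ((DAHA.T q 3) * (DAHA.T q 3 * (DAHA.T q 0) - (DAHA.T q 0) * DAHA.T q 3) * (DAHA.tInv q 0 * DAHA.tInv q 3 * DAHA.tInv q 1)) +
      ((-1 : F) * q ^ 1) • ((DAHA.T q 3 * (DAHA.T q 0) - (DAHA.T q 0) * DAHA.T q 3) * (DAHA.tInv q 0 * DAHA.tInv q 3 * DAHA.tInv q 1 * DAHA.tInv q 3)) +
      ((-1 : F) * q ^ 1) • ((DAHA.T q 0 * DAHA.tInv q 0 * DAHA.tInv q 3 * DAHA.tInv q 1) * (DAHA.tInv q 3 * DAHA.t q 3 - 1)) +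
      ((1 : F) * q ^ 1) • (((DAHA.tInv q 0 * DAHA.tInv q 3 * DAHA.tInv q 0) * (DAHA.T q 1) - (DAHA.T q 1) * (DAHA.tInv q 0 * DAHA.tInv q 3 * DAHA.tInv q 0)) * (DAHA.t q 3 * DAHA.t q 3)) +
      ((1 : F) * q ^ 1) • (((DAHA.T q 1 * DAHA.tInv q 0 * DAHA.tInv q 3 * DAHA.tInv q 0) * (DAHA.T q 3) - (DAHA.T q 3) * (DAHA.T q 1 * DAHA.tInv q 0 * DAHA.tInv q 3 * DAHA.tInv q 0)) * (DAHA.t q 3)) +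
      ((1 : F) * q ^ 1) • (((DAHA.T q 3 * DAHA.T q 1 * DAHA.tInv q 0 * DAHA.tInv q 3 * DAHA.tInv q 0) * (DAHA.T q 3) - (DAHA.T q 3) * (DAHA.T q 3 * DAHA.T q 1 * DAHA.tInv q 0 * DAHA.tInv q 3 * DAHA.tInv q 0))) +
      ((1 : F) * q ^ 1) • ((DAHA.T q 3) * (DAHA.T q 3 * (DAHA.T q 1) - (DAHA.T q 1) * DAHA.T q 3) * (DAHA.tInv q 0 * DAHA.tInv q 3 * DAHA.tInv q 0)) +
      ((-1 : F) * q ^ 1) • ((DAHA.T q 3 * (DAHA.T q 1) - (DAHA.T q 1) * DAHA.T q 3) * (DAHA.tInv q 0 * DAHA.tInv q 3 * DAHA.tInv q 0 * DAHA.tInv q 3)) +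
      ((-1 : F) * q ^ 1) • ((DAHA.T q 1 * DAHA.tInv q 0 * DAHA.tInv q 3 * DAHA.tInv q 0) * (DAHA.tInv q 3 * DAHA.t q 3 - 1)) +
      ((-1 : F) * q ^ 1) • (((DAHA.tInv q 0 * DAHA.tInv q 3 * DAHA.tInv q 0 * DAHA.tInv q 1) * (DAHA.T q 3) - (DAHA.T q 3) * (DAHA.tInv q 0 * DAHA.tInv q 3 * DAHA.tInv q 0 * DAHA.tInv q 1)) * (DAHA.t q 3)) +
      ((1 : F) * q ^ 1) • ((DAHA.tInv q 0 * DAHA.tInv q 3 * DAHA.tInv q 0 * DAHA.tInv q 1) * (DAHA.tInv q 3 * DAHA.t q 3 - 1)) +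
      ((-1 : F) * 1) • ((DAHA.tInv q 0 * DAHA.t q 3) * (DAHA.t q 2 - q⁻¹ • (DAHA.tInv q 1 * (DAHA.tInv q 0 * DAHA.tInv q 3))) * (DAHA.t q 3)) +
      ((-1 : F) * q⁻¹ ^ 1) • ((DAHA.tInv q 0 * DAHA.t q 3 * DAHA.tInv q 1 * DAHA.tInv q 0) * (DAHA.tInv q 3 * DAHA.t q 3 - 1)) +
      ((-1 : F) * q⁻¹ ^ 1) • (((DAHA.tInv q 0) * (DAHA.T q 3) - (DAHA.T q 3) * (DAHA.tInv q 0)) * (DAHA.tInv q 1 * DAHA.tInv q 0)) +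
      ((-1 : F) * 1) • ((DAHA.tInv q 0 * DAHA.t q 3) * (DAHA.tInv q 2 - q • (DAHA.t q 3 * (DAHA.t q 0 * DAHA.t q 1))) * (DAHA.t q 3)) +
      ((-1 : F) * q ^ 1) • (((DAHA.tInv q 0) * (DAHA.T q 3) - (DAHA.T q 3) * (DAHA.tInv q 0)) * (DAHA.t q 3 * DAHA.t q 0 * DAHA.t q 1 * DAHA.t q 3)) +
      ((-1 : F) * q ^ 1) • (((DAHA.T q 3 * DAHA.tInv q 0) * (DAHA.T q 3) - (DAHA.T q 3) * (DAHA.T q 3 * DAHA.tInv q 0)) * (DAHA.t q 0 * DAHA.t q 1 * DAHA.t q 3)) +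
      ((-1 : F) * q ^ 1) • ((DAHA.T q 3 * DAHA.T q 3) * (DAHA.tInv q 0 * DAHA.t q 0 - 1) * (DAHA.t q 1 * DAHA.t q 3)) +
      ((-1 : F) * q ^ 1) • (((DAHA.T q 3 * DAHA.T q 3) * (DAHA.T q 1) - (DAHA.T q 1) * (DAHA.T q 3 * DAHA.T q 3)) * (DAHA.t q 3)) +
      ((-1 : F) * q ^ 1) • (((DAHA.T q 1 * DAHA.T q 3 * DAHA.T q 3) * (DAHA.T q 3) - (DAHA.T q 3) * (DAHA.T q 1 * DAHA.T q 3 * DAHA.T q 3))) +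
      ((1 : F) * q ^ 1) • (((DAHA.T q 3 * DAHA.tInv q 0 * DAHA.tInv q 3) * (DAHA.T q 0) - (DAHA.T q 0) * (DAHA.T q 3 * DAHA.tInv q 0 * DAHA.tInv q 3)) * (DAHA.t q 1 * DAHA.t q 3)) +
      ((1 : F) * q ^ 1) • (((DAHA.T q 0 * DAHA.T q 3 * DAHA.tInv q 0 * DAHA.tInv q 3) * (DAHA.T q 1) - (DAHA.T q 1) * (DAHA.T q 0 * DAHA.T q 3 * DAHA.tInv q 0 * DAHA.tInv q 3)) * (DAHA.t q 3)) +
      ((1 : F) * q ^ 1) • ((DAHA.T q 1 * DAHA.T q 0 * DAHA.T q 3 * DAHA.tInv q 0) * (DAHA.tInv q 3 * DAHA.t q 3 - 1)) +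
      ((-1 : F) * q ^ 1) • (((DAHA.T q 0 * DAHA.T q 3 * DAHA.tInv q 0 * DAHA.tInv q 3 * DAHA.tInv q 1) * (DAHA.T q 3) - (DAHA.T q 3) * (DAHA.T q 0 * DAHA.T q 3 * DAHA.tInv q 0 * DAHA.tInv q 3 * DAHA.tInv q 1))) +
      ((-1 : F) * q ^ 1) • (((DAHA.T q 3 * DAHA.tInv q 0 * DAHA.tInv q 3 * DAHA.tInv q 0) * (DAHA.T q 1) - (DAHA.T q 1) * (DAHA.T q 3 * DAHA.tInv q 0 * DAHA.tInv q 3 * DAHA.tInv q 0)) * (DAHA.t q 3)) +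
      ((-1 : F) * q ^ 1) • (((DAHA.T q 1 * DAHA.T q 3 * DAHA.tInv q 0 * DAHA.tInv q 3 * DAHA.tInv q 0) * (DAHA.T q 3) - (DAHA.T q 3) * (DAHA.T q 1 * DAHA.T q 3 * DAHA.tInv q 0 * DAHA.tInv q 3 * DAHA.tInv q 0))) +
      ((1 : F) * q ^ 1) • ((DAHA.tInv q 0) * (DAHA.tInv q 3 * DAHA.t q 3 - 1) * (DAHA.t q 0 * DAHA.t q 1 * DAHA.t q 3)) +
      ((1 : F) * q ^ 1) • ((DAHA.tInv q 0 * DAHA.t q 0 - 1) * (DAHA.t q 1 * DAHA.t q 3)) +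
      ((1 : F) * q ^ 1) • (((DAHA.T q 1) * (DAHA.T q 3) - (DAHA.T q 3) * (DAHA.T q 1))) +
      ((-1 : F) * q ^ 1) • (((DAHA.tInv q 1) * (DAHA.T q 3) - (DAHA.T q 3) * (DAHA.tInv q 1))) := by
    simp only [DAHA.T, mul_add, add_mul, mul_sub, sub_mul, smul_add, smul_sub,
      smul_smul, mul_smul_comm, smul_mul_assoc, mul_assoc, one_mul, mul_one]
    match_scalars <;> field_simp <;> ring
  simp only [DAHA.z_invR, DAHA.z_invL, DAHA.z_w, DAHA.z_wb q hq0, DAHA.z_T,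
    mul_zero, zero_mul, smul_zero, add_zero, zero_add, sub_zero] at key
  exact key
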